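/- arXiv:1207.6850 — 3 statements merged into one kernel-verified Lean document; each statement's English description precedes it below -/
import Mathlib

section
/- Let s = (s_1,…,s_n) be a sequence of positive integers. The map sending r = (r_1,…,r_n) ∈ Ψ_n to the point (des_s^{<1}(r)·s_1 + r_1, des_s^{<2}(r)·s_2 + r_2, …, des_s^{<n}(r)·s_n + r_n) is a bijection from Ψ_n onto Par_s ∩ ℤ^n, and it is the inverse of the map REM_s which sends x ∈ Par_s ∩ ℤ^n to (x_1 mod s_1, …, x_n mod s_n). -/
/-- The generator vectors of the s-lecture hall parallelepiped: `lhVec s j` has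
`i`-th coordinate `s i` for `i ≥ j` and `0` for `i < j`. -/
def lhVec {n : ℕ} (s : Fin n → ℕ) (j : Fin n) : Fin n → ℝ :=
  fun i => if j ≤ i then (s i : ℝ) else 0

/-- The s-lecture hall parallelepiped: the half-open parallelepiped generated by
the vectors `lhVec s j`. -/
def lhPar {n : ℕ} (s : Fin n → ℕ) : Set (Fin n → ℝ) :=
  {x | ∃ c : Fin n → ℝ, (∀ j, 0 ≤ c j ∧ c j < 1) ∧ x = ∑ j, c j • lhVec s j}

/-- `lhEll S i` is the number of lattice points of `S ⊆ ℝ^N` whose last coordinate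
equals `i`. -/
noncomputable def lhEll {N : ℕ} (S : Set (Fin N → ℝ)) (i : ℕ) : ℕ :=
  Set.ncard {x : Fin N → ℤ | (fun k => (x k : ℝ)) ∈ S ∧
    ∀ j : Fin N, (j : ℕ) = N - 1 → x j = (i : ℤ)}

/-- The number of s-descents of `r`: indices `i` with `r i / s i > r (i+1) / s (i+1)`. -/
noncomputable def sDes {N : ℕ} (s : Fin N → ℕ) (r : Fin N → ℤ) : ℕ :=
  Set.ncard {i : Fin N | ∃ h : (i : ℕ) + 1 < N,
    (r i : ℚ) / (s i : ℚ) > (r ⟨(i : ℕ) + 1, h⟩ : ℚ) / (s ⟨(i : ℕ) + 1, h⟩ : ℚ)}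

/-- The number of s-ascents of `r`: indices `i` with `r i / s i < r (i+1) / s (i+1)`. -/
noncomputable def sAsc {N : ℕ} (s : Fin N → ℕ) (r : Fin N → ℤ) : ℕ :=
  Set.ncard {i : Fin N | ∃ h : (i : ℕ) + 1 < N,
    (r i : ℚ) / (s i : ℚ) < (r ⟨(i : ℕ) + 1, h⟩ : ℚ) / (s ⟨(i : ℕ) + 1, h⟩ : ℚ)}

/-- The number of (regular) descents of `r`: indices `i` with `r i > r (i+1)`. -/
noncomputable def rDes {N : ℕ} (r : Fin N → ℤ) : ℕ :=
  Set.ncard {i : Fin N | ∃ h : (i : ℕ) + 1 < N, r ⟨(i : ℕ) + 1, h⟩ < r i}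

/-- The number of (regular) ascents of `r`: indices `i` with `r i < r (i+1)`. -/
noncomputable def rAsc {N : ℕ} (r : Fin N → ℤ) : ℕ :=
  Set.ncard {i : Fin N | ∃ h : (i : ℕ) + 1 < N, r i < r ⟨(i : ℕ) + 1, h⟩}

/-- The number of s-descents of `r` at positions strictly before position `i`. -/
noncomputable def sDesLt {N : ℕ} (s : Fin N → ℕ) (r : Fin N → ℤ) (i : Fin N) : ℕ :=
  Set.ncard {j : Fin N | (j : ℕ) < (i : ℕ) ∧ ∃ h : (j : ℕ) + 1 < N,
    (r j : ℚ) / (s j : ℚ) > (r ⟨(j : ℕ) + 1, h⟩ : ℚ) / (s ⟨(j : ℕ) + 1, h⟩ : ℚ)}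

/-- `lhPsi s` is the set `Ψ_n = {0,…,s 0 − 1} × ⋯ × {0,…,s (n-1) − 1}`. -/
def lhPsi {n : ℕ} (s : Fin n → ℕ) : Set (Fin n → ℤ) :=
  {r | ∀ i, 0 ≤ r i ∧ r i < (s i : ℤ)}

/-- `inDilate s t lam` says that the lattice point `lam` satisfies
`0 ≤ lam 0 / s 0 ≤ lam 1 / s 1 ≤ ⋯ ≤ lam (n-1) / s (n-1) ≤ t`,
i.e. lies in the `t`-th dilate of the s-lecture hall polytope. -/
def inDilate {n : ℕ} (s : Fin n → ℕ) (t : ℕ) (lam : Fin n → ℤ) : Prop :=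
  (∀ i : Fin n, (i : ℕ) = 0 → 0 ≤ (lam i : ℚ) / (s i : ℚ)) ∧
  (∀ i : Fin n, ∀ h : (i : ℕ) + 1 < n,
    (lam i : ℚ) / (s i : ℚ) ≤ (lam ⟨(i : ℕ) + 1, h⟩ : ℚ) / (s ⟨(i : ℕ) + 1, h⟩ : ℚ)) ∧
  (∀ i : Fin n, (i : ℕ) = n - 1 → (lam i : ℚ) / (s i : ℚ) ≤ (t : ℚ))


section Aux
variable {n : ℕ} (s : Fin n → ℕ)

lemma lh_sum_apply (c : Fin n → ℝ) (i : Fin n) :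
    (∑ j, c j • lhVec s j) i = (∑ j ∈ Finset.univ.filter (fun j => j ≤ i), c j) * (s i : ℝ) := by
  simp only [Finset.sum_apply, Pi.smul_apply, smul_eq_mul, lhVec, mul_ite, mul_zero,
    ← Finset.sum_filter, Finset.sum_mul]

lemma filter_le_zero (h : 0 < n) :
    Finset.univ.filter (fun j : Fin n => j ≤ ⟨0, h⟩) = {⟨0, h⟩} := by
  ext j
  simp [Fin.le_def, Nat.le_zero, Fin.ext_iff]

lemma filter_le_succ (m : ℕ) (h : m + 1 < n) :
    Finset.univ.filter (fun j : Fin n => j ≤ ⟨m + 1, h⟩) =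
      insert ⟨m + 1, h⟩ (Finset.univ.filter (fun j => j ≤ (⟨m, by omega⟩ : Fin n))) := by
  ext j
  simp only [Finset.mem_filter, Finset.mem_univ, true_and, Finset.mem_insert, Fin.le_def,
    Fin.ext_iff]
  omega

/-- Integer characterization of lattice points of the lecture hall parallelepiped. -/
def Qc (x : Fin n → ℤ) : Prop :=
  (∀ h : 0 < n, 0 ≤ x ⟨0, h⟩ ∧ x ⟨0, h⟩ < (s ⟨0, h⟩ : ℤ)) ∧
  ∀ m : ℕ, ∀ h : m + 1 < n,
    x ⟨m, by omega⟩ * (s ⟨m + 1, h⟩ : ℤ) ≤ x ⟨m + 1, h⟩ * (s ⟨m, by omega⟩ : ℤ) ∧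
    x ⟨m + 1, h⟩ * (s ⟨m, by omega⟩ : ℤ) <
      x ⟨m, by omega⟩ * (s ⟨m + 1, h⟩ : ℤ) + (s ⟨m, by omega⟩ : ℤ) * (s ⟨m + 1, h⟩ : ℤ)

end Aux
section Aux2
variable {n : ℕ} (s : Fin n → ℕ)

/-- coefficient function for the backward direction -/
noncomputable def lhC (x : Fin n → ℤ) : Fin n → ℝ := fun j =>
  if (j : ℕ) = 0 then (x j : ℝ) / (s j : ℝ)
  else (x j : ℝ) / (s j : ℝ) -
    (x ⟨(j : ℕ) - 1, lt_of_le_of_lt (Nat.sub_le _ _) j.isLt⟩ : ℝ) /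
      (s ⟨(j : ℕ) - 1, lt_of_le_of_lt (Nat.sub_le _ _) j.isLt⟩ : ℝ)

lemma lhC_zero (x : Fin n → ℤ) (h : 0 < n) :
    lhC s x ⟨0, h⟩ = (x ⟨0, h⟩ : ℝ) / (s ⟨0, h⟩ : ℝ) := by simp [lhC]

lemma lhC_succ (x : Fin n → ℤ) (k : ℕ) (h : k + 1 < n) :
    lhC s x ⟨k + 1, h⟩ = (x ⟨k + 1, h⟩ : ℝ) / (s ⟨k + 1, h⟩ : ℝ) -
      (x ⟨k, by omega⟩ : ℝ) / (s ⟨k, by omega⟩ : ℝ) := by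
  simp [lhC]

lemma mem_iff (hs : ∀ i, 0 < s i) (x : Fin n → ℤ) :
    (fun k => (x k : ℝ)) ∈ lhPar s ↔ Qc s x := by
  have hsR : ∀ i, (0 : ℝ) < (s i : ℝ) := fun i => by exact_mod_cast hs i
  constructor
  · rintro ⟨c, hc, hx⟩
    have hco : ∀ i : Fin n, (x i : ℝ) =
        (∑ j ∈ Finset.univ.filter (fun j => j ≤ i), c j) * (s i : ℝ) := fun i => by
      rw [← lh_sum_apply]; exact congrFun hx i
    constructor
    · intro h
      have h0 := hco ⟨0, h⟩
      rw [filter_le_zero, Finset.sum_singleton] at h0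
      have hb := hc ⟨0, h⟩
      constructor
      · exact_mod_cast h0 ▸ mul_nonneg hb.1 (hsR _).le
      · have : (x ⟨0, h⟩ : ℝ) < (s ⟨0, h⟩ : ℝ) := by
          rw [h0]; nlinarith [hsR ⟨0, h⟩, hb.1, hb.2]
        exact_mod_cast this
    · intro m h
      have h1 := hco ⟨m + 1, h⟩
      have h0 := hco ⟨m, by omega⟩
      rw [filter_le_succ, Finset.sum_insert (by simp [Fin.le_def])] at h1
      have hb := hc ⟨m + 1, h⟩
      set C := ∑ j ∈ Finset.univ.filter (fun j => j ≤ (⟨m, by omega⟩ : Fin n)), c j with hC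
      constructor
      · have : (x ⟨m, by omega⟩ : ℝ) * (s ⟨m + 1, h⟩ : ℝ) ≤
            (x ⟨m + 1, h⟩ : ℝ) * (s ⟨m, by omega⟩ : ℝ) := by
          rw [h0, h1]
          nlinarith [mul_nonneg (mul_nonneg hb.1 (hsR (⟨m, by omega⟩ : Fin n)).le)
            (hsR ⟨m + 1, h⟩).le]
        exact_mod_cast this
      · have : (x ⟨m + 1, h⟩ : ℝ) * (s ⟨m, by omega⟩ : ℝ) <
            (x ⟨m, by omega⟩ : ℝ) * (s ⟨m + 1, h⟩ : ℝ) +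
            (s ⟨m, by omega⟩ : ℝ) * (s ⟨m + 1, h⟩ : ℝ) := by
          rw [h0, h1]
          nlinarith [mul_lt_mul_of_pos_right hb.2
            (mul_pos (hsR (⟨m, by omega⟩ : Fin n)) (hsR ⟨m + 1, h⟩))]
        exact_mod_cast this
  · intro hQ
    refine ⟨lhC s x, ?_, ?_⟩
    · rintro ⟨jv, hj⟩
      cases jv with
      | zero =>
        rw [lhC_zero]
        have hb := hQ.1 (by omega)
        have h0 : (0 : ℝ) ≤ (x ⟨0, hj⟩ : ℝ) := by exact_mod_cast hb.1
        have h1 : (x ⟨0, hj⟩ : ℝ) < (s ⟨0, hj⟩ : ℝ) := by exact_mod_cast hb.2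
        exact ⟨div_nonneg h0 (hsR _).le, (div_lt_one (hsR _)).2 h1⟩
      | succ k =>
        rw [lhC_succ]
        have hb := hQ.2 k hj
        have h0 : (x ⟨k, by omega⟩ : ℝ) * (s ⟨k + 1, hj⟩ : ℝ) ≤
            (x ⟨k + 1, hj⟩ : ℝ) * (s ⟨k, by omega⟩ : ℝ) := by exact_mod_cast hb.1
        have h1 : (x ⟨k + 1, hj⟩ : ℝ) * (s ⟨k, by omega⟩ : ℝ) <
            (x ⟨k, by omega⟩ : ℝ) * (s ⟨k + 1, hj⟩ : ℝ) +
            (s ⟨k, by omega⟩ : ℝ) * (s ⟨k + 1, hj⟩ : ℝ) := by exact_mod_cast hb.2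
        rw [div_sub_div _ _ (hsR ⟨k + 1, hj⟩).ne' (hsR ⟨k, by omega⟩).ne']
        have hP : (0 : ℝ) < (s ⟨k + 1, hj⟩ : ℝ) * (s ⟨k, by omega⟩ : ℝ) :=
          mul_pos (hsR _) (hsR _)
        constructor
        · exact div_nonneg (by linarith) hP.le
        · exact (div_lt_one hP).2 (by linarith)
    · have tele : ∀ m : ℕ, ∀ hm : m < n,
          ∑ j ∈ Finset.univ.filter (fun j => j ≤ (⟨m, hm⟩ : Fin n)), lhC s x j =
            (x ⟨m, hm⟩ : ℝ) / (s ⟨m, hm⟩ : ℝ) := by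
        intro m
        induction m with
        | zero => intro hm; rw [filter_le_zero, Finset.sum_singleton, lhC_zero]
        | succ k ih =>
          intro hm
          rw [filter_le_succ, Finset.sum_insert (by simp [Fin.le_def]), ih (by omega),
            lhC_succ]
          ring
      funext i
      rw [lh_sum_apply]
      obtain ⟨iv, hi⟩ := i
      rw [tele iv hi, div_mul_cancel₀ _ (hsR ⟨iv, hi⟩).ne']

end Aux2
section Aux3
variable {n : ℕ} (s : Fin n → ℕ)

/-- The s-descent predicate at position `j`. -/
def lhD (r : Fin n → ℤ) (j : Fin n) : Prop :=
  ∃ h : (j : ℕ) + 1 < n,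
    (r j : ℚ) / (s j : ℚ) > (r ⟨(j : ℕ) + 1, h⟩ : ℚ) / (s ⟨(j : ℕ) + 1, h⟩ : ℚ)

lemma ncard_filter_eq (P : Fin n → Prop) [DecidablePred P] :
    Set.ncard {j : Fin n | P j} = (Finset.univ.filter P).card := by
  rw [← Set.ncard_coe_finset]
  congr 1
  ext j
  simp

lemma sDesLt_def (r : Fin n → ℤ) (i : Fin n) :
    sDesLt s r i = Set.ncard {j : Fin n | (j : ℕ) < (i : ℕ) ∧ lhD s r j} := rfl

lemma sDesLt_zero (r : Fin n → ℤ) (h : 0 < n) : sDesLt s r ⟨0, h⟩ = 0 := by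
  rw [sDesLt_def]
  convert Set.ncard_empty (Fin n)
  ext j
  simp

open Classical in
lemma sDesLt_succ (r : Fin n → ℤ) (m : ℕ) (h : m + 1 < n) :
    sDesLt s r ⟨m + 1, h⟩ =
      sDesLt s r ⟨m, by omega⟩ + if lhD s r ⟨m, by omega⟩ then 1 else 0 := by
  classical
  rw [sDesLt_def, sDesLt_def, ncard_filter_eq, ncard_filter_eq]
  have hsplit : Finset.univ.filter (fun j : Fin n => (j : ℕ) < m + 1 ∧ lhD s r j) =
      Finset.univ.filter (fun j : Fin n => (j : ℕ) < m ∧ lhD s r j) ∪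
      Finset.univ.filter (fun j : Fin n => j = (⟨m, by omega⟩ : Fin n) ∧ lhD s r j) := by
    ext j
    simp only [Finset.mem_filter, Finset.mem_univ, true_and, Finset.mem_union, Fin.ext_iff]
    constructor
    · rintro ⟨h1, h2⟩
      rcases Nat.lt_succ_iff_lt_or_eq.1 h1 with h' | h'
      · exact Or.inl ⟨h', h2⟩
      · exact Or.inr ⟨h', h2⟩
    · rintro (⟨h1, h2⟩ | ⟨h1, h2⟩)
      · exact ⟨by omega, h2⟩
      · exact ⟨by omega, h2⟩
  rw [hsplit, Finset.card_union_of_disjoint]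
  · congr 1
    by_cases hd : lhD s r (⟨m, by omega⟩ : Fin n)
    · rw [if_pos hd]
      have : Finset.univ.filter (fun j : Fin n => j = (⟨m, by omega⟩ : Fin n) ∧ lhD s r j) =
          {(⟨m, by omega⟩ : Fin n)} := by
        ext j
        simp only [Finset.mem_filter, Finset.mem_univ, true_and, Finset.mem_singleton]
        exact ⟨And.left, fun e => ⟨e, e ▸ hd⟩⟩
      rw [this, Finset.card_singleton]
    · rw [if_neg hd]
      have : Finset.univ.filter (fun j : Fin n => j = (⟨m, by omega⟩ : Fin n) ∧ lhD s r j) =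
          ∅ := by
        ext j
        simp only [Finset.mem_filter, Finset.mem_univ, true_and, Finset.notMem_empty,
          iff_false, not_and]
        rintro rfl
        exact hd
      rw [this, Finset.card_empty]
  · rw [Finset.disjoint_left]
    rintro a ha hb
    simp only [Finset.mem_filter, Finset.mem_univ, true_and, Fin.ext_iff] at ha hb
    omega

lemma lhD_iff (hs : ∀ i, 0 < s i) (r : Fin n → ℤ) (m : ℕ) (h : m + 1 < n) :
    lhD s r (⟨m, by omega⟩ : Fin n) ↔
      r ⟨m + 1, h⟩ * (s ⟨m, by omega⟩ : ℤ) < r ⟨m, by omega⟩ * (s ⟨m + 1, h⟩ : ℤ) := by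
  have hq : ∀ i : Fin n, (0 : ℚ) < (s i : ℚ) := fun i => by exact_mod_cast hs i
  constructor
  · rintro ⟨h', hlt⟩
    rw [gt_iff_lt, div_lt_div_iff₀ (hq _) (hq _)] at hlt
    exact_mod_cast hlt
  · intro hlt
    refine ⟨h, ?_⟩
    rw [gt_iff_lt, div_lt_div_iff₀ (hq _) (hq _)]
    exact_mod_cast hlt

end Aux3
section Aux4
variable {n : ℕ} (s : Fin n → ℕ)

lemma phi_mem (hs : ∀ i, 0 < s i) (r : Fin n → ℤ) (hr : r ∈ lhPsi s) :
    Qc s (fun i => (sDesLt s r i : ℤ) * (s i : ℤ) + r i) := by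
  classical
  constructor
  · intro h
    simp only [sDesLt_zero s r h]
    have := hr ⟨0, h⟩
    push_cast
    constructor <;> [linarith [this.1]; linarith [this.2]]
  · intro m h
    have hm : m < n := by omega
    set a := r ⟨m, hm⟩ with ha
    set b := r ⟨m + 1, h⟩ with hb
    have hpZ : (0 : ℤ) < (s ⟨m, hm⟩ : ℤ) := by exact_mod_cast hs ⟨m, hm⟩
    have hqZ : (0 : ℤ) < (s ⟨m + 1, h⟩ : ℤ) := by exact_mod_cast hs ⟨m + 1, h⟩
    have hra := hr ⟨m, hm⟩
    have hrb := hr ⟨m + 1, h⟩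
    simp only
    rw [sDesLt_succ s r m h]
    have h1 : a * (s ⟨m + 1, h⟩ : ℤ) ≤ (s ⟨m, hm⟩ : ℤ) * (s ⟨m + 1, h⟩ : ℤ) :=
      mul_le_mul_of_nonneg_right (by linarith [hra.2]) hqZ.le
    have h2 : b * (s ⟨m, hm⟩ : ℤ) < (s ⟨m + 1, h⟩ : ℤ) * (s ⟨m, hm⟩ : ℤ) :=
      mul_lt_mul_of_pos_right hrb.2 hpZ
    have h3 : 0 ≤ b * (s ⟨m, hm⟩ : ℤ) := mul_nonneg hrb.1 hpZ.le
    have h4 : 0 ≤ a * (s ⟨m + 1, h⟩ : ℤ) := mul_nonneg hra.1 hqZ.le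
    by_cases hd : lhD s r (⟨m, hm⟩ : Fin n)
    · have hdes := (lhD_iff s hs r m h).1 hd
      rw [if_pos hd]
      push_cast
      constructor <;> [nlinarith; nlinarith]
    · have hnd : a * (s ⟨m + 1, h⟩ : ℤ) ≤ b * (s ⟨m, hm⟩ : ℤ) := by
        by_contra hcon
        exact hd ((lhD_iff s hs r m h).2 (by linarith))
      rw [if_neg hd]
      push_cast
      constructor <;> [nlinarith; nlinarith]

end Aux4
section Aux5
variable {n : ℕ} (s : Fin n → ℕ)

lemma sdeslt_eq_ediv (hs : ∀ i, 0 < s i) (x : Fin n → ℤ) (hx : Qc s x) :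
    ∀ m : ℕ, ∀ hm : m < n,
      (sDesLt s (fun k => x k % (s k : ℤ)) ⟨m, hm⟩ : ℤ) = x ⟨m, hm⟩ / (s ⟨m, hm⟩ : ℤ) := by
  classical
  set r : Fin n → ℤ := fun k => x k % (s k : ℤ) with hrdef
  have hsZ : ∀ i : Fin n, (0 : ℤ) < (s i : ℤ) := fun i => by exact_mod_cast hs i
  have hr0 : ∀ i, 0 ≤ r i := fun i => Int.emod_nonneg _ (hsZ i).ne'
  have hr1 : ∀ i, r i < (s i : ℤ) := fun i => Int.emod_lt_of_pos _ (hsZ i)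
  have hde : ∀ i : Fin n, x i = (s i : ℤ) * (x i / (s i : ℤ)) + r i := fun i =>
    (Int.mul_ediv_add_emod _ _).symm
  intro m
  induction m with
  | zero =>
    intro hm
    rw [sDesLt_zero]
    have h0 := hx.1 hm
    rw [Int.ediv_eq_zero_of_lt h0.1 h0.2]
    rfl
  | succ m ih =>
    intro hm
    have hm' : m < n := by omega
    set p : ℤ := (s ⟨m, hm'⟩ : ℤ) with hp
    set q : ℤ := (s ⟨m + 1, hm⟩ : ℤ) with hq
    set km : ℤ := x ⟨m, hm'⟩ / p with hkm
    set kq : ℤ := x ⟨m + 1, hm⟩ / q with hkq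
    have hpq : 0 < p * q := mul_pos (hsZ _) (hsZ _)
    have hA : x ⟨m, hm'⟩ * q ≤ x ⟨m + 1, hm⟩ * p := (hx.2 m hm).1
    have hB : x ⟨m + 1, hm⟩ * p < x ⟨m, hm'⟩ * q + p * q := (hx.2 m hm).2
    have hxm : x ⟨m, hm'⟩ = p * km + r ⟨m, hm'⟩ := hde ⟨m, hm'⟩
    have hxq : x ⟨m + 1, hm⟩ = q * kq + r ⟨m + 1, hm⟩ := hde ⟨m + 1, hm⟩
    have e1 : r ⟨m, hm'⟩ * q < p * q := mul_lt_mul_of_pos_right (hr1 _) (hsZ _)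
    have e2 : r ⟨m + 1, hm⟩ * p < q * p := mul_lt_mul_of_pos_right (hr1 _) (hsZ _)
    have e3 : 0 ≤ r ⟨m, hm'⟩ * q := mul_nonneg (hr0 _) (hsZ _).le
    have e4 : 0 ≤ r ⟨m + 1, hm⟩ * p := mul_nonneg (hr0 _) (hsZ _).le
    rw [hxm, hxq] at hA hB
    have HA : km * (p * q) + r ⟨m, hm'⟩ * q ≤ kq * (p * q) + r ⟨m + 1, hm⟩ * p := by
      linarith [hA]
    have HB : kq * (p * q) + r ⟨m + 1, hm⟩ * p < km * (p * q) + r ⟨m, hm'⟩ * q + p * q := by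
      linarith [hB]
    have ht1 : (-1 : ℤ) * (p * q) < (kq - km) * (p * q) := by linarith [HA, e2, e3]
    have ht2 : (kq - km) * (p * q) < 2 * (p * q) := by linarith [HB, e1, e4]
    have ht1' : (-1 : ℤ) < kq - km := lt_of_mul_lt_mul_right (by linarith) hpq.le
    have ht2' : kq - km < 2 := lt_of_mul_lt_mul_right (by linarith) hpq.le
    have ht : kq = km ∨ kq = km + 1 := by omega
    rw [sDesLt_succ s r m hm]
    have hDiff : lhD s r (⟨m, hm'⟩ : Fin n) ↔ r ⟨m + 1, hm⟩ * p < r ⟨m, hm'⟩ * q :=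
      lhD_iff s hs r m hm
    have ihv := ih hm'
    rcases ht with ht | ht
    · have hnd : ¬ lhD s r (⟨m, hm'⟩ : Fin n) := by
        rw [hDiff]
        push_neg
        rw [ht] at HA
        linarith [HA]
      rw [if_neg hnd]
      push_cast
      rw [ihv]
      linarith [ht]
    · have hdd : lhD s r (⟨m, hm'⟩ : Fin n) := by
        rw [hDiff]
        rw [ht] at HB
        linarith [HB]
      rw [if_pos hdd]
      push_cast
      rw [ihv]
      linarith [ht]

end Aux5
/-- the map `r ↦ (des_s^{<i}(r)·s_i + r_i)_i` is a bijection from `Ψ_n`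
onto `Par_s ∩ ℤ^n`, and it is inverse to the remainder map `REM_s`. -/
theorem stmt_6 (n : ℕ) (s : Fin n → ℕ) (hs : ∀ i, 0 < s i) :
    Set.BijOn (fun (r : Fin n → ℤ) (i : Fin n) => (sDesLt s r i : ℤ) * (s i : ℤ) + r i)
      (lhPsi s)
      {x : Fin n → ℤ | (fun k => (x k : ℝ)) ∈ lhPar s} ∧
    Set.InvOn (fun (x : Fin n → ℤ) (i : Fin n) => x i % (s i : ℤ))
      (fun (r : Fin n → ℤ) (i : Fin n) => (sDesLt s r i : ℤ) * (s i : ℤ) + r i)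
      (lhPsi s)
      {x : Fin n → ℤ | (fun k => (x k : ℝ)) ∈ lhPar s} := by
  classical
  have hsZ : ∀ i : Fin n, (0 : ℤ) < (s i : ℤ) := fun i => by exact_mod_cast hs i
  have hMapsF : Set.MapsTo (fun (r : Fin n → ℤ) (i : Fin n) => (sDesLt s r i : ℤ) * (s i : ℤ) + r i)
      (lhPsi s) {x : Fin n → ℤ | (fun k => (x k : ℝ)) ∈ lhPar s} := by
    intro r hr
    exact (mem_iff s hs _).2 (phi_mem s hs r hr)
  have hMapsG : Set.MapsTo (fun (x : Fin n → ℤ) (i : Fin n) => x i % (s i : ℤ))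
      {x : Fin n → ℤ | (fun k => (x k : ℝ)) ∈ lhPar s} (lhPsi s) := by
    intro x _ i
    exact ⟨Int.emod_nonneg _ (hsZ i).ne', Int.emod_lt_of_pos _ (hsZ i)⟩
  have hLeft : Set.LeftInvOn (fun (x : Fin n → ℤ) (i : Fin n) => x i % (s i : ℤ))
      (fun (r : Fin n → ℤ) (i : Fin n) => (sDesLt s r i : ℤ) * (s i : ℤ) + r i) (lhPsi s) := by
    intro r hr
    funext i
    simp only
    rw [show (sDesLt s r i : ℤ) * (s i : ℤ) + r i
        = r i + (s i : ℤ) * (sDesLt s r i : ℤ) by ring,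
      Int.add_mul_emod_self_left, Int.emod_eq_of_lt (hr i).1 (hr i).2]
  have hRight : Set.RightInvOn (fun (x : Fin n → ℤ) (i : Fin n) => x i % (s i : ℤ))
      (fun (r : Fin n → ℤ) (i : Fin n) => (sDesLt s r i : ℤ) * (s i : ℤ) + r i)
      {x : Fin n → ℤ | (fun k => (x k : ℝ)) ∈ lhPar s} := by
    intro x hx
    have hQ : Qc s x := (mem_iff s hs x).1 hx
    funext i
    obtain ⟨iv, hi⟩ := i
    simp only
    rw [sdeslt_eq_ediv s hs x hQ iv hi]
    have := Int.mul_ediv_add_emod (x ⟨iv, hi⟩) ((s ⟨iv, hi⟩ : ℤ))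
    linarith [this]
  have hInv : Set.InvOn (fun (x : Fin n → ℤ) (i : Fin n) => x i % (s i : ℤ))
      (fun (r : Fin n → ℤ) (i : Fin n) => (sDesLt s r i : ℤ) * (s i : ℤ) + r i)
      (lhPsi s) {x : Fin n → ℤ | (fun k => (x k : ℝ)) ∈ lhPar s} := ⟨hLeft, hRight⟩
  exact ⟨hInv.bijOn hMapsF hMapsG, hInv⟩
end

section
/- Let s = (s_1,…,s_n) be a sequence of positive integers with s_n = 1. Then for every nonnegative integer i, ℓ^i(Par_s) = #{ r ∈ Ψ_n : des_s(r) = i }, i.e., the number of lattice points of Par_s whose last coordinate is i equals the number of elements of Ψ_n with exactly i s-descents. -/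
/-!
In the coordinates `q i = λ i / s i`, a lattice point `λ` lies in `Par_s` iff `q 0 ∈ [0, 1)` and
`q (i + 1) - q i ∈ [0, 1)` for all `i`. Under the latter condition `⌊q (i + 1)⌋ = ⌊q i⌋ + 1`
exactly when the fractional part drops, i.e. when `r = λ mod s` has an s-descent at `i`, and
otherwise the integer parts agree. Hence `λ ↦ λ mod s` is a bijection from the lattice points of
`Par_s` onto `Ψ_n`, with inverse `r i ↦ r i + s i * #{s-descents of r before i}`. Since `s_n = 1`
forces `r_n = 0`, the last coordinate of the point attached to `r` is `des_s r`.
-/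

open Finset

namespace Fin

variable {n : ℕ}

lemma Iic_mk_zero (h : 0 < n) : Iic (⟨0, h⟩ : Fin n) = {⟨0, h⟩} := by
  ext j; simp [Fin.le_def, Fin.ext_iff]

lemma Iic_mk_succ {k : ℕ} (hk : k + 1 < n) :
    Iic (⟨k + 1, hk⟩ : Fin n) = insert ⟨k + 1, hk⟩ (Iic ⟨k, by omega⟩) := by
  ext j; simp [Fin.le_def, Fin.ext_iff]; omega

lemma Iio_mk_succ {k : ℕ} (hk : k + 1 < n) :
    Iio (⟨k + 1, hk⟩ : Fin n) = insert ⟨k, by omega⟩ (Iio ⟨k, by omega⟩) := by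
  ext j; simp only [mem_Iio, mem_insert, Fin.lt_def, Fin.ext_iff]; omega

end Fin

section FinDiff

variable {n : ℕ} {G H : Type*} [AddCommGroup G] [AddCommGroup H]

/-- Backward differences of `y`, with the convention `y (-1) = 0`. -/
def finDiff (y : Fin n → G) (j : Fin n) : G :=
  y j - if h : (j : ℕ) = 0 then 0 else y ⟨j - 1, by omega⟩

@[simp]
lemma finDiff_mk_zero (y : Fin n → G) (h : 0 < n) : finDiff y ⟨0, h⟩ = y ⟨0, h⟩ := by
  simp [finDiff]

@[simp]
lemma finDiff_mk_succ (y : Fin n → G) {k : ℕ} (hk : k + 1 < n) :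
    finDiff y ⟨k + 1, hk⟩ = y ⟨k + 1, hk⟩ - y ⟨k, by omega⟩ := by
  simp [finDiff]

lemma finDiff_map {F : Type*} [FunLike F G H] [AddMonoidHomClass F G H] (f : F)
    (y : Fin n → G) : finDiff (fun i => f (y i)) = fun j => f (finDiff y j) := by
  funext ⟨j, hj⟩
  cases j <;> simp

lemma sum_Iic_finDiff (y : Fin n → G) (i : Fin n) : ∑ j ∈ Iic i, finDiff y j = y i := by
  obtain ⟨k, hk⟩ := i
  induction k with
  | zero => simp [Fin.Iic_mk_zero]
  | succ k ih =>
    rw [Fin.Iic_mk_succ hk, sum_insert (by simp [Fin.le_def]), ih]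
    simp

lemma eq_finDiff_of_sum_Iic {c y : Fin n → G} (h : ∀ i, y i = ∑ j ∈ Iic i, c j) :
    c = finDiff y := by
  funext ⟨j, hj⟩
  cases j with
  | zero => simp [h, Fin.Iic_mk_zero]
  | succ k => simp [h, Fin.Iic_mk_succ hj, sum_insert, Fin.le_def]

end FinDiff

section Parallelepiped

variable {n : ℕ} {s : Fin n → ℕ}

lemma sum_smul_lhVec_apply (c : Fin n → ℝ) (i : Fin n) :
    (∑ j, c j • lhVec s j) i = s i * ∑ j ∈ Iic i, c j := by
  simp only [Finset.sum_apply, Pi.smul_apply, lhVec, smul_eq_mul, mul_ite, mul_zero,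
    ← sum_filter, mul_sum]
  exact sum_congr (by ext; simp) fun _ _ => mul_comm _ _

/-- In the coordinates `x i / s i` the generators of `lhPar s` become the partial-sum
vectors, so `lhPar s` is the set where all backward differences lie in `[0, 1)`. -/
theorem mem_lhPar_iff (hs : ∀ i, 0 < s i) (x : Fin n → ℝ) :
    x ∈ lhPar s ↔ ∀ j, finDiff (fun i => x i / s i) j ∈ Set.Ico 0 1 := by
  have hx : ∀ c : Fin n → ℝ, x = ∑ j, c j • lhVec s j ↔ ∀ i, x i / s i = ∑ j ∈ Iic i, c j := by
    intro c
    refine funext_iff.trans (forall_congr' fun i => ?_)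
    rw [sum_smul_lhVec_apply, div_eq_iff (by exact_mod_cast (hs i).ne'), mul_comm]
  constructor
  · rintro ⟨c, hc, hxc⟩
    rw [← eq_finDiff_of_sum_Iic ((hx c).1 hxc)]
    exact hc
  · exact fun h => ⟨_, h, (hx _).2 fun i => (sum_Iic_finDiff (fun i => x i / s i) i).symm⟩

end Parallelepiped

section Descents

variable {n : ℕ} {β : Type*} [LinearOrder β]

def desBefore (f : Fin n → β) (i : Fin n) : ℕ :=
  #((Iio i).filter fun j : Fin n => ∃ h : (j : ℕ) + 1 < n, f ⟨j + 1, h⟩ < f j)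

lemma desBefore_mk_zero (f : Fin n → β) (h : 0 < n) : desBefore f ⟨0, h⟩ = 0 := by
  simp [desBefore, Fin.lt_def]

lemma desBefore_mk_succ (f : Fin n → β) {k : ℕ} (hk : k + 1 < n) :
    desBefore f ⟨k + 1, hk⟩ =
      desBefore f ⟨k, by omega⟩ + if f ⟨k + 1, hk⟩ < f ⟨k, by omega⟩ then 1 else 0 := by
  rw [desBefore, desBefore, Fin.Iio_mk_succ, filter_insert]
  simp only [hk, exists_true_left]
  split_ifs
  · exact card_insert_of_notMem (by simp)
  · rfl

lemma sDesLt_eq_desBefore (s : Fin n → ℕ) (r : Fin n → ℤ) :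
    sDesLt s r = desBefore fun j => (r j : ℚ) / s j := by
  funext i
  rw [sDesLt, desBefore, ← Set.ncard_coe_finset]
  congr 1
  ext j
  simp

end Descents

section Floor

variable {n : ℕ} {α : Type*} [CommRing α] [LinearOrder α] [IsStrictOrderedRing α] [FloorRing α]

theorem Int.sub_mem_Ico_iff_floor_eq {a b : α} :
    b - a ∈ Set.Ico 0 1 ↔ ⌊b⌋ = ⌊a⌋ + if Int.fract b < Int.fract a then 1 else 0 := by
  obtain ⟨d, hd⟩ : ∃ d : ℤ, ⌊b⌋ = ⌊a⌋ + d := ⟨_, (add_sub_cancel _ _).symm⟩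
  have hab : b - a = d + (Int.fract b - Int.fract a) := by
    rw [Int.fract, Int.fract, hd]; push_cast; ring
  have := Int.fract_nonneg a; have := Int.fract_lt_one a
  have := Int.fract_nonneg b; have := Int.fract_lt_one b
  rw [Set.mem_Ico, hab, hd, add_right_inj]
  split_ifs with hf
  · constructor
    · rintro ⟨h0, h1⟩
      have hlo : (0 : α) < d := by linarith
      have hhi : (d : α) < (2 : ℤ) := by push_cast; linarith
      have := Int.cast_pos.mp hlo; have := Int.cast_lt.mp hhi
      omega
    · rintro rfl
      push_cast
      constructor <;> linarith
  · constructor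
    · rintro ⟨h0, h1⟩
      have hlo : ((-1 : ℤ) : α) < d := by push_cast; linarith
      have hhi : (d : α) < (1 : ℤ) := by push_cast; linarith
      have := Int.cast_lt.mp hlo; have := Int.cast_lt.mp hhi
      omega
    · rintro rfl
      push_cast
      constructor <;> linarith

theorem forall_finDiff_mem_Ico_iff (q : Fin n → α) :
    (∀ j, finDiff q j ∈ Set.Ico 0 1) ↔ ∀ i, ⌊q i⌋ = desBefore (fun j => Int.fract (q j)) i := by
  constructor
  · rintro h ⟨k, hk⟩
    induction k with
    | zero =>
      rw [desBefore_mk_zero, Nat.cast_zero, Int.floor_eq_zero_iff]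
      simpa using h ⟨0, hk⟩
    | succ k ih =>
      have := h ⟨k + 1, hk⟩
      rw [finDiff_mk_succ, Int.sub_mem_Ico_iff_floor_eq, ih] at this
      rw [this, desBefore_mk_succ]
      push_cast
      rfl
  · rintro h ⟨j, hj⟩
    cases j with
    | zero => simpa [Int.floor_eq_zero_iff, desBefore_mk_zero] using h ⟨0, hj⟩
    | succ k =>
      rw [finDiff_mk_succ, Int.sub_mem_Ico_iff_floor_eq, h, h, desBefore_mk_succ]
      push_cast
      rfl

end Floor

section LatticePoints

variable {n : ℕ} {s : Fin n → ℕ}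

theorem lattice_mem_lhPar_iff (hs : ∀ i, 0 < s i) (lam : Fin n → ℤ) :
    (fun k => (lam k : ℝ)) ∈ lhPar s ↔ ∀ i, lam i / s i = sDesLt s (fun j => lam j % s j) i := by
  set q : Fin n → ℚ := fun i => lam i / s i
  have hcast : (fun i => (lam i : ℝ) / s i) = fun i => Rat.castHom ℝ (q i) := by
    funext i; simp [q]
  have hIco (x : ℚ) : (x : ℝ) ∈ Set.Ico 0 1 ↔ x ∈ Set.Ico 0 1 := by
    simp only [Set.mem_Ico]; norm_cast
  rw [mem_lhPar_iff hs, hcast, finDiff_map]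
  simp only [Rat.coe_castHom, hIco, forall_finDiff_mem_Ico_iff, q, sDesLt_eq_desBefore,
    Int.fract_div_intCast_eq_div_intCast_mod, Rat.floor_intCast_div_natCast]

variable (s) in
noncomputable def lhLift (r : Fin n → ℤ) (i : Fin n) : ℤ :=
  r i + s i * sDesLt s r i

lemma lhLift_emod {r : Fin n → ℤ} (hr : r ∈ lhPsi s) (i : Fin n) :
    lhLift s r i % s i = r i := by
  rw [lhLift, Int.add_mul_emod_self_left, Int.emod_eq_of_lt (hr i).1 (hr i).2]

lemma lhLift_ediv (hs : ∀ i, 0 < s i) {r : Fin n → ℤ} (hr : r ∈ lhPsi s) (i : Fin n) :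
    lhLift s r i / s i = sDesLt s r i := by
  have : (s i : ℤ) ≠ 0 := by exact_mod_cast (hs i).ne'
  rw [lhLift, Int.add_mul_ediv_left _ _ this, Int.ediv_eq_zero_of_lt (hr i).1 (hr i).2, zero_add]

lemma emod_mem_lhPsi (hs : ∀ i, 0 < s i) (lam : Fin n → ℤ) :
    (fun i => lam i % s i) ∈ lhPsi s := fun i =>
  ⟨Int.emod_nonneg _ (by exact_mod_cast (hs i).ne'), Int.emod_lt_of_pos _ (by exact_mod_cast hs i)⟩

variable (s) in
lemma lhLift_injOn : Set.InjOn (lhLift s) (lhPsi s) :=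
  fun r hr r' hr' h => funext fun i => by rw [← lhLift_emod hr, h, lhLift_emod hr']

theorem image_lhLift_lhPsi (hs : ∀ i, 0 < s i) :
    lhLift s '' lhPsi s = {lam | (fun k => (lam k : ℝ)) ∈ lhPar s} := by
  ext lam
  simp only [Set.mem_image, Set.mem_ofPred_eq, lattice_mem_lhPar_iff hs]
  constructor
  · rintro ⟨r, hr, rfl⟩ i
    rw [funext (lhLift_emod hr), lhLift_ediv hs hr]
  · intro h
    refine ⟨_, emod_mem_lhPsi hs lam, funext fun i => ?_⟩
    rw [lhLift, ← h i, Int.emod_add_mul_ediv]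

lemma sDes_eq_sDesLt_last (hn : 0 < n) (r : Fin n → ℤ) :
    sDes s r = sDesLt s r ⟨n - 1, Nat.sub_lt hn one_pos⟩ := by
  rw [sDes, sDesLt]
  congr 1
  ext j
  simp only [Set.mem_ofPred_eq]
  exact ⟨fun ⟨h, hd⟩ => ⟨by omega, h, hd⟩, fun ⟨_, hd⟩ => hd⟩

lemma lhLift_last (hn : 0 < n) (hlast : s ⟨n - 1, Nat.sub_lt hn one_pos⟩ = 1) {r : Fin n → ℤ}
    (hr : r ∈ lhPsi s) : lhLift s r ⟨n - 1, Nat.sub_lt hn one_pos⟩ = sDes s r := by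
  have hr0 : r ⟨n - 1, Nat.sub_lt hn one_pos⟩ = 0 := by
    have := hr ⟨n - 1, Nat.sub_lt hn one_pos⟩
    rw [hlast] at this
    omega
  rw [lhLift, hr0, hlast, sDes_eq_sDesLt_last hn]
  simp

end LatticePoints

/-- if `s_n = 1`, then `ℓ^i(Par_s) = #{r ∈ Ψ_n : des_s(r) = i}`. -/
theorem stmt_7 (n : ℕ) (hn : 0 < n) (s : Fin n → ℕ) (hs : ∀ i, 0 < s i)
    (hlast : s ⟨n - 1, by omega⟩ = 1) (i : ℕ) :
    lhEll (lhPar s) i = Set.ncard {r ∈ lhPsi s | sDes s r = i} := by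
  have hfiber : {r ∈ lhPsi s | sDes s r = i} =
      lhPsi s ∩ lhLift s ⁻¹' {lam | ∀ j : Fin n, (j : ℕ) = n - 1 → lam j = i} := by
    ext r
    refine and_congr_right fun hr => ?_
    simp only [Set.mem_preimage, Set.mem_ofPred_eq]
    constructor
    · rintro hdes j hj
      rw [show j = ⟨n - 1, by omega⟩ from Fin.ext hj, lhLift_last hn hlast hr, hdes]
    · intro h
      exact_mod_cast (lhLift_last hn hlast hr).symm.trans (h _ rfl)
  rw [hfiber, ← ((lhLift_injOn s).mono Set.inter_subset_left).ncard_image,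
    Set.image_inter_preimage, image_lhLift_lhPsi hs]
  rfl
end

section
/- Let s = (s_1,…,s_n) be a sequence of positive integers and s* = (s_1,…,s_n,1). Then for every nonnegative integer i, ℓ^i(Par_{s*}) = #{ r ∈ Ψ_n : des_{s*}(r_1,…,r_n,0) = i }, i.e., the number of lattice points of Par_{s*} ⊂ ℝ^{n+1} whose last coordinate is i equals the number of r ∈ Ψ_n such that the sequence (r_1,…,r_n,0) has exactly i s*-descents. -/
-- ===== snoc helpers =====

lemma lh_snoc_lt {α : Type*} {n : ℕ} (p : Fin n → α) (y : α) (m : ℕ) (h : m < n)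
    (h' : m < n + 1) : (Fin.snoc p y : Fin (n+1) → α) ⟨m, h'⟩ = p ⟨m, h⟩ := by
  have e : (⟨m, h'⟩ : Fin (n+1)) = Fin.castSucc ⟨m, h⟩ := rfl
  rw [e, Fin.snoc_castSucc]

lemma lh_snoc_last {α : Type*} {n : ℕ} (p : Fin n → α) (y : α) (h : n < n + 1) :
    (Fin.snoc p y : Fin (n+1) → α) ⟨n, h⟩ = y := by
  have e : (⟨n, h⟩ : Fin (n+1)) = Fin.last n := rfl
  rw [e, Fin.snoc_last]

lemma lh_t_pos {n : ℕ} (s : Fin n → ℕ) (hs : ∀ i, 0 < s i) :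
    ∀ i : Fin (n+1), 0 < (Fin.snoc s 1 : Fin (n+1) → ℕ) i := by
  rintro ⟨m, hm⟩
  rcases Nat.lt_or_ge m n with h | h
  · rw [lh_snoc_lt s 1 m h hm]; exact hs _
  · have : m = n := by omega
    subst this
    rw [lh_snoc_last s 1 hm]; norm_num

lemma lh_rstar_bounds {n : ℕ} (s : Fin n → ℕ) (r : Fin n → ℤ) (hr : r ∈ lhPsi s) :
    ∀ i : Fin (n+1), 0 ≤ (Fin.snoc r (0:ℤ) : Fin (n+1) → ℤ) i ∧
      (Fin.snoc r (0:ℤ) : Fin (n+1) → ℤ) i < ((Fin.snoc s 1 : Fin (n+1) → ℕ) i : ℤ) := by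
  rintro ⟨m, hm⟩
  rcases Nat.lt_or_ge m n with h | h
  · rw [lh_snoc_lt r 0 m h hm, lh_snoc_lt s 1 m h hm]
    exact hr ⟨m, h⟩
  · have : m = n := by omega
    subst this
    rw [lh_snoc_last r 0 hm, lh_snoc_last s 1 hm]
    norm_num

-- ===== div lemmas =====


section helpers

lemma lh_div_le_div (a b : ℤ) (c d : ℕ) (hc : 0 < c) (hd : 0 < d) :
    (a:ℝ)/(c:ℝ) ≤ (b:ℝ)/(d:ℝ) ↔ a * d ≤ b * c := by
  have hc' : (0:ℝ) < c := by exact_mod_cast hc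
  have hd' : (0:ℝ) < d := by exact_mod_cast hd
  rw [div_le_div_iff₀ hc' hd']
  exact_mod_cast Iff.rfl

lemma lh_div_lt_div (a b : ℤ) (c d : ℕ) (hc : 0 < c) (hd : 0 < d) :
    (a:ℝ)/(c:ℝ) < (b:ℝ)/(d:ℝ) ↔ a * d < b * c := by
  have hc' : (0:ℝ) < c := by exact_mod_cast hc
  have hd' : (0:ℝ) < d := by exact_mod_cast hd
  rw [div_lt_div_iff₀ hc' hd']
  exact_mod_cast Iff.rfl

lemma lh_div_le_divq (a b : ℤ) (c d : ℕ) (hc : 0 < c) (hd : 0 < d) :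
    (a:ℚ)/(c:ℚ) ≤ (b:ℚ)/(d:ℚ) ↔ a * d ≤ b * c := by
  have hc' : (0:ℚ) < c := by exact_mod_cast hc
  have hd' : (0:ℚ) < d := by exact_mod_cast hd
  rw [div_le_div_iff₀ hc' hd']
  exact_mod_cast Iff.rfl

lemma lh_div_lt_divq (a b : ℤ) (c d : ℕ) (hc : 0 < c) (hd : 0 < d) :
    (a:ℚ)/(c:ℚ) < (b:ℚ)/(d:ℚ) ↔ a * d < b * c := by
  have hc' : (0:ℚ) < c := by exact_mod_cast hc
  have hd' : (0:ℚ) < d := by exact_mod_cast hd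
  rw [div_lt_div_iff₀ hc' hd']
  exact_mod_cast Iff.rfl

lemma lh_div_nonneg (a : ℤ) (c : ℕ) (hc : 0 < c) : (0:ℝ) ≤ (a:ℝ)/(c:ℝ) ↔ 0 ≤ a := by
  have hc' : (0:ℝ) < c := by exact_mod_cast hc
  rw [le_div_iff₀ hc', zero_mul]
  exact_mod_cast Iff.rfl

lemma lh_div_lt_one (a : ℤ) (c : ℕ) (hc : 0 < c) : (a:ℝ)/(c:ℝ) < 1 ↔ a < c := by
  have hc' : (0:ℝ) < c := by exact_mod_cast hc
  rw [div_lt_one hc']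
  exact_mod_cast Iff.rfl

lemma lh_div_lt_div_add_one (a b : ℤ) (c d : ℕ) (hc : 0 < c) (hd : 0 < d) :
    (b:ℝ)/(d:ℝ) < (a:ℝ)/(c:ℝ) + 1 ↔ b * c < (a + c) * d := by
  have hc' : (0:ℝ) < c := by exact_mod_cast hc
  have : (a:ℝ)/(c:ℝ) + 1 = ((a + c : ℤ):ℝ)/(c:ℝ) := by
    push_cast; field_simp
  rw [this, lh_div_lt_div b (a+c) d c hd hc]

end helpers

-- ===== arithmetic lemmas =====

lemma lh_step_arith (ta tb Da Db : ℕ) (a b : ℤ) (hta : 0 < ta) (htb : 0 < tb)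
    (ha0 : 0 ≤ a) (ha1 : a < (ta:ℤ)) (hb0 : 0 ≤ b) (hb1 : b < (tb:ℤ))
    (hD : (Db : ℤ) = (Da:ℤ) + (if (b:ℚ)/(tb:ℚ) < (a:ℚ)/(ta:ℚ) then 1 else 0)) :
    ((ta:ℤ) * Da + a) * tb ≤ ((tb:ℤ) * Db + b) * ta ∧
    ((tb:ℤ) * Db + b) * ta < (((ta:ℤ) * Da + a) + ta) * tb := by
  have htaZ : (0:ℤ) < (ta:ℤ) := by exact_mod_cast hta
  have htbZ : (0:ℤ) < (tb:ℤ) := by exact_mod_cast htb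
  have f1 : a * tb < (ta:ℤ) * tb := mul_lt_mul_of_pos_right ha1 htbZ
  have f2 : (0:ℤ) ≤ b * ta := mul_nonneg hb0 htaZ.le
  have f3 : (0:ℤ) ≤ a * tb := mul_nonneg ha0 htbZ.le
  have f4 : b * ta < (tb:ℤ) * ta := mul_lt_mul_of_pos_right hb1 htaZ
  by_cases hd : (b:ℚ)/(tb:ℚ) < (a:ℚ)/(ta:ℚ)
  · rw [if_pos hd] at hD
    have hd' : b * ta < a * tb := (lh_div_lt_divq b a tb ta htb hta).1 hd
    constructor <;> nlinarith
  · rw [if_neg hd] at hD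
    have hd' : a * tb ≤ b * ta := (lh_div_le_divq a b ta tb hta htb).1 (le_of_not_gt hd)
    constructor <;> nlinarith

lemma lh_surj_arith (ta tb Da : ℕ) (a b q : ℤ) (hta : 0 < ta) (htb : 0 < tb)
    (ha0 : 0 ≤ a) (ha1 : a < (ta:ℤ)) (hb0 : 0 ≤ b) (hb1 : b < (tb:ℤ))
    (h1 : ((ta:ℤ) * Da + a) * tb ≤ ((tb:ℤ) * q + b) * ta)
    (h2 : ((tb:ℤ) * q + b) * ta < (((ta:ℤ) * Da + a) + ta) * tb) :
    q = (Da:ℤ) + (if (b:ℚ)/(tb:ℚ) < (a:ℚ)/(ta:ℚ) then 1 else 0) := by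
  have htaZ : (0:ℤ) < (ta:ℤ) := by exact_mod_cast hta
  have htbZ : (0:ℤ) < (tb:ℤ) := by exact_mod_cast htb
  have hT : (0:ℤ) < (ta:ℤ) * tb := mul_pos htaZ htbZ
  have f1 : a * tb < (ta:ℤ) * tb := mul_lt_mul_of_pos_right ha1 htbZ
  have f2 : (0:ℤ) ≤ b * ta := mul_nonneg hb0 htaZ.le
  have f3 : (0:ℤ) ≤ a * tb := mul_nonneg ha0 htbZ.le
  have f4 : b * ta < (tb:ℤ) * ta := mul_lt_mul_of_pos_right hb1 htaZ
  by_cases hd : (b:ℚ)/(tb:ℚ) < (a:ℚ)/(ta:ℚ)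
  · rw [if_pos hd]
    have hd' : b * ta < a * tb := (lh_div_lt_divq b a tb ta htb hta).1 hd
    have hlow : (Da:ℤ) < q := by
      by_contra hq
      push_neg at hq
      have : q * ((ta:ℤ) * tb) ≤ (Da:ℤ) * ((ta:ℤ) * tb) :=
        mul_le_mul_of_nonneg_right hq hT.le
      nlinarith
    have hhigh : q < (Da:ℤ) + 2 := by
      by_contra hq
      push_neg at hq
      have : ((Da:ℤ) + 2) * ((ta:ℤ) * tb) ≤ q * ((ta:ℤ) * tb) :=
        mul_le_mul_of_nonneg_right hq hT.le
      nlinarith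
    omega
  · rw [if_neg hd]
    have hd' : a * tb ≤ b * ta := (lh_div_le_divq a b ta tb hta htb).1 (le_of_not_gt hd)
    have hlow : (Da:ℤ) - 1 < q := by
      by_contra hq
      push_neg at hq
      have : q * ((ta:ℤ) * tb) ≤ ((Da:ℤ) - 1) * ((ta:ℤ) * tb) :=
        mul_le_mul_of_nonneg_right hq hT.le
      nlinarith
    have hhigh : q < (Da:ℤ) + 1 := by
      by_contra hq
      push_neg at hq
      have : ((Da:ℤ) + 1) * ((ta:ℤ) * tb) ≤ q * ((ta:ℤ) * tb) :=
        mul_le_mul_of_nonneg_right hq hT.le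
      nlinarith
    omega

section dlem

variable {N : ℕ} (t : Fin N → ℕ) (r : Fin N → ℤ)

lemma sDesLt_zero_s8 (h : 0 < N) : sDesLt t r ⟨0, h⟩ = 0 := by
  rw [sDesLt, Set.ncard_eq_zero (Set.toFinite _)]
  ext j; simp

lemma sDesLt_succ_s8 (m : ℕ) (h : m + 1 < N) (h' : m < N) :
    sDesLt t r ⟨m+1, h⟩ = sDesLt t r ⟨m, h'⟩ +
      (if (r ⟨m+1, h⟩ : ℚ) / (t ⟨m+1, h⟩ : ℚ) < (r ⟨m, h'⟩ : ℚ) / (t ⟨m, h'⟩ : ℚ)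
        then 1 else 0) := by
  set A : Set (Fin N) := {j : Fin N | (j : ℕ) < m ∧ ∃ h : (j : ℕ) + 1 < N,
    (r j : ℚ) / (t j : ℚ) > (r ⟨(j : ℕ) + 1, h⟩ : ℚ) / (t ⟨(j : ℕ) + 1, h⟩ : ℚ)} with hA
  have hAm : sDesLt t r ⟨m, by omega⟩ = A.ncard := rfl
  by_cases hd : (r ⟨m+1, h⟩ : ℚ) / (t ⟨m+1, h⟩ : ℚ) < (r ⟨m, by omega⟩ : ℚ) / (t ⟨m, by omega⟩ : ℚ)
  · rw [if_pos hd, hAm]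
    have hset : {j : Fin N | (j : ℕ) < m + 1 ∧ ∃ h : (j : ℕ) + 1 < N,
        (r j : ℚ) / (t j : ℚ) > (r ⟨(j : ℕ) + 1, h⟩ : ℚ) / (t ⟨(j : ℕ) + 1, h⟩ : ℚ)}
        = insert (⟨m, by omega⟩ : Fin N) A := by
      ext ⟨jv, hjv⟩
      simp only [Set.mem_setOf_eq, Set.mem_insert_iff, hA, Fin.mk.injEq]
      constructor
      · rintro ⟨hj, hj2, hj3⟩
        rcases Nat.lt_or_ge jv m with hlt | hge
        · exact Or.inr ⟨hlt, hj2, hj3⟩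
        · have : jv = m := by omega
          subst this
          exact Or.inl rfl
      · rintro (rfl | ⟨hj, hj2, hj3⟩)
        · exact ⟨Nat.lt_succ_self _, h, hd⟩
        · exact ⟨by omega, hj2, hj3⟩
    rw [sDesLt, hset, Set.ncard_insert_of_notMem (by simp [hA]) (Set.toFinite _)]
  · rw [if_neg hd, hAm]
    have hset : {j : Fin N | (j : ℕ) < m + 1 ∧ ∃ h : (j : ℕ) + 1 < N,
        (r j : ℚ) / (t j : ℚ) > (r ⟨(j : ℕ) + 1, h⟩ : ℚ) / (t ⟨(j : ℕ) + 1, h⟩ : ℚ)}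
        = A := by
      ext ⟨jv, hjv⟩
      simp only [Set.mem_setOf_eq, hA]
      constructor
      · rintro ⟨hj, hj2, hj3⟩
        refine ⟨?_, hj2, hj3⟩
        rcases Nat.lt_or_ge jv m with hlt | hge
        · exact hlt
        · exfalso
          have : jv = m := by omega
          subst this
          exact hd hj3
      · rintro ⟨hj, hj2, hj3⟩
        exact ⟨by omega, hj2, hj3⟩
    rw [sDesLt, hset, add_zero]

lemma sDesLt_eq_sDes {n : ℕ} (t : Fin (n+1) → ℕ) (r : Fin (n+1) → ℤ) (h : n < n+1) :
    sDesLt t r ⟨n, h⟩ = sDes t r := by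
  rw [sDesLt, sDes]
  congr 1
  ext j
  simp only [Set.mem_setOf_eq]
  constructor
  · rintro ⟨hj, hj2, hj3⟩; exact ⟨hj2, hj3⟩
  · rintro ⟨hj2, hj3⟩; exact ⟨by omega, hj2, hj3⟩

end dlem


section memiff

variable {N : ℕ}

/-- partial sums of `c` as a function of a natural index. -/
noncomputable def lhG (c : Fin N → ℝ) (m : ℕ) : ℝ :=
  ∑ j ∈ Finset.range m, (if h : j < N then c ⟨j, h⟩ else 0)

lemma lh_coord (t : Fin N → ℕ) (c : Fin N → ℝ) (i : Fin N) :
    (∑ j, c j • lhVec t j) i = (t i : ℝ) * lhG c ((i:ℕ)+1) := by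
  have h1 : (∑ j, c j • lhVec t j) i = ∑ j : Fin N, (if h : (j:ℕ) < N then
      (if (j:ℕ) ≤ (i:ℕ) then c ⟨(j:ℕ), h⟩ * (t i : ℝ) else 0) else 0) := by
    rw [Finset.sum_apply]
    refine Finset.sum_congr rfl fun j _ => ?_
    rcases j with ⟨jv, hj⟩
    simp only [Pi.smul_apply, lhVec, smul_eq_mul, dif_pos hj]
    simp only [Fin.le_def]
    split <;> simp [mul_comm]
  rw [h1, Fin.sum_univ_eq_sum_range (fun m => if h : m < N then
      (if m ≤ (i:ℕ) then c ⟨m, h⟩ * (t i : ℝ) else 0) else 0)]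
  rw [lhG, Finset.mul_sum]
  rw [← Finset.sum_subset (Finset.range_subset_range.2 (by omega : (i:ℕ)+1 ≤ N))]
  · refine Finset.sum_congr rfl fun m hm => ?_
    have hmi : m ≤ (i:ℕ) := by simp at hm; omega
    have hmN : m < N := by omega
    rw [dif_pos hmN, if_pos hmi, dif_pos hmN, mul_comm]
  · intro m hm hm2
    have : ¬ m ≤ (i:ℕ) := by simp at hm hm2 ⊢; omega
    have hmN : m < N := by simp at hm; omega
    rw [dif_pos hmN, if_neg this]

lemma lhG_succ (c : Fin N → ℝ) (m : ℕ) (h : m < N) :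
    lhG c (m+1) = lhG c m + c ⟨m, h⟩ := by
  rw [lhG, Finset.sum_range_succ, dif_pos h]; rfl

lemma lh_mem_iff (t : Fin N → ℕ) (ht : ∀ i, 0 < t i) (x : Fin N → ℝ) :
    x ∈ lhPar t ↔
      (∀ h0 : 0 < N, 0 ≤ x ⟨0, h0⟩ / (t ⟨0, h0⟩ : ℝ) ∧ x ⟨0, h0⟩ / (t ⟨0, h0⟩ : ℝ) < 1) ∧
      (∀ (m : ℕ) (h : m + 1 < N),
        x ⟨m, by omega⟩ / (t ⟨m, by omega⟩ : ℝ) ≤ x ⟨m+1, h⟩ / (t ⟨m+1, h⟩ : ℝ) ∧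
        x ⟨m+1, h⟩ / (t ⟨m+1, h⟩ : ℝ) < x ⟨m, by omega⟩ / (t ⟨m, by omega⟩ : ℝ) + 1) := by
  have htR : ∀ i : Fin N, (0:ℝ) < (t i : ℝ) := fun i => by exact_mod_cast ht i
  constructor
  · rintro ⟨c, hc, hx⟩
    have key : ∀ i : Fin N, x i / (t i : ℝ) = lhG c ((i:ℕ)+1) := by
      intro i
      rw [hx, lh_coord, mul_comm, mul_div_assoc, div_self (ne_of_gt (htR i)), mul_one]
    constructor
    · intro h0
      have : x ⟨0, h0⟩ / (t ⟨0, h0⟩ : ℝ) = c ⟨0, h0⟩ := by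
        rw [key, lhG_succ c 0 h0, lhG, Finset.sum_range_zero, zero_add]
      rw [this]; exact hc _
    · intro m h
      have h1 : x ⟨m+1, h⟩ / (t ⟨m+1, h⟩ : ℝ)
          = x ⟨m, by omega⟩ / (t ⟨m, by omega⟩ : ℝ) + c ⟨m+1, h⟩ := by
        rw [key, key, lhG_succ c (m+1) h]
      rw [h1]
      have := hc ⟨m+1, h⟩
      constructor <;> linarith [this.1, this.2]
  · rintro ⟨h0, hstep⟩
    set c : Fin N → ℝ := fun j => if hj : (j:ℕ) = 0 then x j / (t j : ℝ) else
      x j / (t j : ℝ) - x ⟨(j:ℕ)-1, Nat.lt_of_le_of_lt (Nat.sub_le _ _) j.isLt⟩ /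
        (t ⟨(j:ℕ)-1, Nat.lt_of_le_of_lt (Nat.sub_le _ _) j.isLt⟩ : ℝ) with hcdef
    have claim : ∀ (m : ℕ) (h : m < N), lhG c (m+1) = x ⟨m, h⟩ / (t ⟨m, h⟩ : ℝ) := by
      intro m
      induction m with
      | zero =>
        intro h
        rw [lhG_succ c 0 h, lhG, Finset.sum_range_zero, zero_add, hcdef]
        simp
      | succ m ih =>
        intro h
        have hm : m < N := by omega
        rw [lhG_succ c (m+1) h, ih hm, hcdef]
        have : ((⟨m+1, h⟩ : Fin N) : ℕ) ≠ 0 := by simp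
        simp only [dif_neg this]
        simp only [Nat.add_sub_cancel]
        ring
    refine ⟨c, ?_, ?_⟩
    · intro j
      obtain ⟨jv, hj⟩ := j
      rcases Nat.eq_zero_or_pos jv with rfl | hpos
      · simp only [hcdef, dif_pos rfl]
        exact h0 (by omega)
      · obtain ⟨m, rfl⟩ : ∃ m, jv = m + 1 := ⟨jv - 1, by omega⟩
        have := hstep m hj
        simp only [hcdef]
        rw [dif_neg (by simp)]
        simp only [Nat.add_sub_cancel]
        exact ⟨by linarith [this.1], by linarith [this.2]⟩
    · funext i
      rw [lh_coord, claim (i:ℕ) i.isLt, mul_comm, div_mul_cancel₀ _ (ne_of_gt (htR i))]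

end memiff

-- continuation: phi lemmas + theorem (to be appended after defs+helpers+memiff+dlem)

noncomputable def lhPhi {n : ℕ} (s : Fin n → ℕ) (r : Fin n → ℤ) : Fin (n+1) → ℤ :=
  fun i => ((Fin.snoc s 1 : Fin (n+1) → ℕ) i : ℤ) *
      (sDesLt (Fin.snoc s 1) (Fin.snoc r 0) i : ℤ) + (Fin.snoc r (0:ℤ) : Fin (n+1) → ℤ) i

lemma lhPhi_last {n : ℕ} (s : Fin n → ℕ) (r : Fin n → ℤ) (h : n < n+1) :
    lhPhi s r ⟨n, h⟩ = sDes (Fin.snoc s 1) (Fin.snoc r 0) := by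
  show ((Fin.snoc s 1 : Fin (n+1) → ℕ) ⟨n, h⟩ : ℤ) *
      (sDesLt (Fin.snoc s 1) (Fin.snoc r 0) ⟨n, h⟩ : ℤ)
      + (Fin.snoc r (0:ℤ) : Fin (n+1) → ℤ) ⟨n, h⟩ = _
  rw [lh_snoc_last s 1 h, lh_snoc_last r (0:ℤ) h, sDesLt_eq_sDes _ _ h]
  simp

lemma lhPhi_mod {n : ℕ} (s : Fin n → ℕ) (r : Fin n → ℤ) (hr : r ∈ lhPsi s) (j : Fin n) :
    lhPhi s r (Fin.castSucc j) % (s j : ℤ) = r j := by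
  show (((Fin.snoc s 1 : Fin (n+1) → ℕ) (Fin.castSucc j) : ℤ) *
      (sDesLt (Fin.snoc s 1) (Fin.snoc r 0) (Fin.castSucc j) : ℤ)
      + (Fin.snoc r (0:ℤ) : Fin (n+1) → ℤ) (Fin.castSucc j)) % (s j : ℤ) = r j
  rw [Fin.snoc_castSucc, Fin.snoc_castSucc, add_comm, Int.add_mul_emod_self_left]
  exact Int.emod_eq_of_lt (hr j).1 (hr j).2

lemma lhPhi_mem {n : ℕ} (s : Fin n → ℕ) (hs : ∀ i, 0 < s i) (r : Fin n → ℤ)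
    (hr : r ∈ lhPsi s) :
    (fun k => ((lhPhi s r k : ℤ) : ℝ)) ∈ lhPar (Fin.snoc s 1) := by
  rw [lh_mem_iff _ (lh_t_pos s hs)]
  have hb := lh_rstar_bounds s r hr
  constructor
  · intro h0
    have e : lhPhi s r ⟨0, h0⟩ = (Fin.snoc r (0:ℤ) : Fin (n+1) → ℤ) ⟨0, h0⟩ := by
      show ((Fin.snoc s 1 : Fin (n+1) → ℕ) ⟨0, h0⟩ : ℤ) *
          (sDesLt (Fin.snoc s 1) (Fin.snoc r 0) ⟨0, h0⟩ : ℤ)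
          + (Fin.snoc r (0:ℤ) : Fin (n+1) → ℤ) ⟨0, h0⟩ = _
      rw [sDesLt_zero_s8]
      simp
    beta_reduce
    rw [e, lh_div_nonneg _ _ (lh_t_pos s hs _), lh_div_lt_one _ _ (lh_t_pos s hs _)]
    exact hb _
  · intro m h
    have h1 : m < n + 1 := by omega
    obtain ⟨ha0, ha1⟩ := hb ⟨m, h1⟩
    obtain ⟨hb0, hb1⟩ := hb ⟨m+1, h⟩
    have hrec := sDesLt_succ_s8 (Fin.snoc s 1) (Fin.snoc r 0) m h h1
    have hrecZ : ((sDesLt (Fin.snoc s 1) (Fin.snoc r 0) ⟨m+1, h⟩ : ℕ) : ℤ)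
        = ((sDesLt (Fin.snoc s 1) (Fin.snoc r 0) ⟨m, h1⟩ : ℕ) : ℤ) +
          (if ((Fin.snoc r (0:ℤ) : Fin (n+1) → ℤ) ⟨m+1, h⟩ : ℚ) /
              ((Fin.snoc s 1 : Fin (n+1) → ℕ) ⟨m+1, h⟩ : ℚ) <
              ((Fin.snoc r (0:ℤ) : Fin (n+1) → ℤ) ⟨m, h1⟩ : ℚ) /
              ((Fin.snoc s 1 : Fin (n+1) → ℕ) ⟨m, h1⟩ : ℚ) then 1 else 0) := by
      rw [hrec]
      split_ifs <;> push_cast <;> ring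
    beta_reduce
    rw [lh_div_le_div _ _ _ _ (lh_t_pos s hs _) (lh_t_pos s hs _),
      lh_div_lt_div_add_one _ _ _ _ (lh_t_pos s hs _) (lh_t_pos s hs _)]
    exact lh_step_arith ((Fin.snoc s 1 : Fin (n+1) → ℕ) ⟨m, h1⟩)
      ((Fin.snoc s 1 : Fin (n+1) → ℕ) ⟨m+1, h⟩)
      (sDesLt (Fin.snoc s 1) (Fin.snoc r 0) ⟨m, h1⟩)
      (sDesLt (Fin.snoc s 1) (Fin.snoc r 0) ⟨m+1, h⟩)
      ((Fin.snoc r (0:ℤ) : Fin (n+1) → ℤ) ⟨m, h1⟩)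
      ((Fin.snoc r (0:ℤ) : Fin (n+1) → ℤ) ⟨m+1, h⟩)
      (lh_t_pos s hs _) (lh_t_pos s hs _) ha0 ha1 hb0 hb1 hrecZ

lemma lhPhi_surj {n : ℕ} (s : Fin n → ℕ) (hs : ∀ i, 0 < s i) (x : Fin (n+1) → ℤ)
    (hx : (fun k => (x k : ℝ)) ∈ lhPar (Fin.snoc s 1)) :
    ∃ r ∈ lhPsi s, lhPhi s r = x := by
  rw [lh_mem_iff _ (lh_t_pos s hs)] at hx
  obtain ⟨h0, hstep⟩ := hx
  set r : Fin n → ℤ := fun j => x (Fin.castSucc j) % (s j : ℤ) with hrdef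
  have hrpsi : r ∈ lhPsi s := by
    intro j
    have hsj : (0:ℤ) < (s j : ℤ) := by exact_mod_cast hs j
    exact ⟨Int.emod_nonneg _ (ne_of_gt hsj), Int.emod_lt_of_pos _ hsj⟩
  have hmod : ∀ (m : ℕ) (hm : m < n+1),
      (Fin.snoc r (0:ℤ) : Fin (n+1) → ℤ) ⟨m, hm⟩
        = x ⟨m, hm⟩ % ((Fin.snoc s 1 : Fin (n+1) → ℕ) ⟨m, hm⟩ : ℤ) := by
    intro m hm
    rcases Nat.lt_or_ge m n with h | h
    · rw [lh_snoc_lt r 0 m h hm, lh_snoc_lt s 1 m h hm]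
      rfl
    · have : m = n := by omega
      subst this
      rw [lh_snoc_last r 0 hm, lh_snoc_last s 1 hm]
      simp
  have hrb := lh_rstar_bounds s r hrpsi
  have claim : ∀ (m : ℕ) (hm : m < n+1),
      x ⟨m, hm⟩ = ((Fin.snoc s 1 : Fin (n+1) → ℕ) ⟨m, hm⟩ : ℤ) *
        (sDesLt (Fin.snoc s 1) (Fin.snoc r 0) ⟨m, hm⟩ : ℤ)
        + (Fin.snoc r (0:ℤ) : Fin (n+1) → ℤ) ⟨m, hm⟩ := by
    intro m
    induction m with
    | zero =>
      intro hm
      have hx0 := h0 hm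
      have e1 : 0 ≤ x ⟨0, hm⟩ := (lh_div_nonneg _ _ (lh_t_pos s hs _)).1 hx0.1
      have e2 : x ⟨0, hm⟩ < ((Fin.snoc s 1 : Fin (n+1) → ℕ) ⟨0, hm⟩ : ℤ) :=
        (lh_div_lt_one _ _ (lh_t_pos s hs _)).1 hx0.2
      rw [sDesLt_zero_s8, hmod 0 hm, Int.emod_eq_of_lt e1 e2]
      simp
    | succ m ih =>
      intro hm
      have h1 : m < n + 1 := by omega
      have hIH := ih h1
      obtain ⟨ha0, ha1⟩ := hrb ⟨m, h1⟩
      obtain ⟨hb0, hb1⟩ := hrb ⟨m+1, hm⟩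
      have hstep' := hstep m hm
      rw [lh_div_le_div _ _ _ _ (lh_t_pos s hs _) (lh_t_pos s hs _),
        lh_div_lt_div_add_one _ _ _ _ (lh_t_pos s hs _) (lh_t_pos s hs _)] at hstep'
      -- restate with our preferred proof terms
      have hstepA : x ⟨m, h1⟩ * ((Fin.snoc s 1 : Fin (n+1) → ℕ) ⟨m+1, hm⟩ : ℤ)
          ≤ x ⟨m+1, hm⟩ * ((Fin.snoc s 1 : Fin (n+1) → ℕ) ⟨m, h1⟩ : ℤ) := hstep'.1
      have hstepB : x ⟨m+1, hm⟩ * ((Fin.snoc s 1 : Fin (n+1) → ℕ) ⟨m, h1⟩ : ℤ)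
          < (x ⟨m, h1⟩ + ((Fin.snoc s 1 : Fin (n+1) → ℕ) ⟨m, h1⟩ : ℤ)) *
            ((Fin.snoc s 1 : Fin (n+1) → ℕ) ⟨m+1, hm⟩ : ℤ) := hstep'.2
      set q : ℤ := x ⟨m+1, hm⟩ / ((Fin.snoc s 1 : Fin (n+1) → ℕ) ⟨m+1, hm⟩ : ℤ) with hq
      have hdecomp : x ⟨m+1, hm⟩ = ((Fin.snoc s 1 : Fin (n+1) → ℕ) ⟨m+1, hm⟩ : ℤ) * q
          + (Fin.snoc r (0:ℤ) : Fin (n+1) → ℤ) ⟨m+1, hm⟩ := by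
        rw [hmod (m+1) hm, hq]
        exact (Int.mul_ediv_add_emod _ _).symm
      rw [hIH] at hstepA hstepB
      rw [hdecomp] at hstepA hstepB
      have harith := lh_surj_arith ((Fin.snoc s 1 : Fin (n+1) → ℕ) ⟨m, h1⟩)
        ((Fin.snoc s 1 : Fin (n+1) → ℕ) ⟨m+1, hm⟩)
        (sDesLt (Fin.snoc s 1) (Fin.snoc r 0) ⟨m, h1⟩)
        ((Fin.snoc r (0:ℤ) : Fin (n+1) → ℤ) ⟨m, h1⟩)
        ((Fin.snoc r (0:ℤ) : Fin (n+1) → ℤ) ⟨m+1, hm⟩) q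
        (lh_t_pos s hs _) (lh_t_pos s hs _) ha0 ha1 hb0 hb1 hstepA hstepB
      have hrec := sDesLt_succ_s8 (Fin.snoc s 1) (Fin.snoc r 0) m hm h1
      rw [hdecomp, harith, hrec]
      split_ifs <;> push_cast <;> ring
  refine ⟨r, hrpsi, ?_⟩
  funext j
  obtain ⟨m, hm⟩ := j
  exact (claim m hm).symm


/-- `ℓ^i(Par_{s*}) = #{r ∈ Ψ_n : des_{s*}(r,0) = i}`. -/
theorem stmt_8 (n : ℕ) (s : Fin n → ℕ) (hs : ∀ i, 0 < s i) (i : ℕ) :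
    lhEll (lhPar (Fin.snoc s 1)) i =
      Set.ncard {r ∈ lhPsi s | sDes (Fin.snoc s 1) (Fin.snoc r (0 : ℤ)) = i} := by
  have hn : n < n + 1 := by omega
  have hBij : Set.BijOn (lhPhi s)
      {r | r ∈ lhPsi s ∧ sDes (Fin.snoc s 1) (Fin.snoc r (0:ℤ)) = i}
      {x : Fin (n+1) → ℤ | (fun k => (x k : ℝ)) ∈ lhPar (Fin.snoc s 1) ∧
        ∀ j : Fin (n+1), (j : ℕ) = (n+1) - 1 → x j = (i : ℤ)} := by
    refine ⟨?_, ?_, ?_⟩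
    · rintro r ⟨hr, hdes⟩
      refine ⟨lhPhi_mem s hs r hr, ?_⟩
      intro j hj
      have : j = (⟨n, hn⟩ : Fin (n+1)) := Fin.ext (show (j:ℕ) = n by omega)
      subst this
      rw [lhPhi_last s r hn, hdes]
    · rintro r ⟨hr, _⟩ r' ⟨hr', _⟩ hphi
      funext j
      rw [← lhPhi_mod s r hr j, ← lhPhi_mod s r' hr' j, hphi]
    · rintro x ⟨hx, hlast⟩
      obtain ⟨r, hrpsi, hphi⟩ := lhPhi_surj s hs x hx
      refine ⟨r, ⟨hrpsi, ?_⟩, hphi⟩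
      have h1 : lhPhi s r ⟨n, hn⟩ = (i : ℤ) := by
        rw [hphi]
        exact hlast ⟨n, hn⟩ (by simp)
      rw [lhPhi_last s r hn] at h1
      exact_mod_cast h1
  rw [lhEll, ← hBij.image_eq, Set.ncard_image_of_injOn hBij.injOn]
end
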